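/- Let T be a stress-energy tensor on (N+1)-dimensional Minkowski space satisfying the dominant energy condition. Let e₀, e₁, …, e_N be an orthonormal frame for η in which e₀ is future-directed timelike, i.e., η(e₀,e₀) = -1, η(e_i,e_i) = 1 for i = 1,…,N, η(e_a,e_b) = 0 for a ≠ b, and (e₀)₀ > 0. Then the frame components of T satisfy |T(e_a,e_b)| ≤ T(e₀,e₀) for all a, b ∈ {0,1,…,N}. -/

import Mathlib

/-! If `u` denotes the endomorphism of `T`, then `T(w, v) = -η(u v, w)`, and by the reverse
Cauchy–Schwarz inequality two future-directed causal vectors have nonpositive Minkowski product;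
so the dominant energy condition makes `T(w, v) ≥ 0` for all future-directed causal `v, w`.
Applied to the null vectors `e₀ ± eₐ` (and to `e₀`), these inequalities give
`T(e₀ ± eₐ, e₀ ± e_b) ≥ 0`, and adding them in pairs so that the cross terms cancel yields
`|T(eₐ, e_b)| ≤ T(e₀, e₀)`. -/

open Matrix

/-- The Minkowski metric `diag(-1,1,…,1)` on `ℝ^{N+1}`. -/
noncomputable def eta (N : ℕ) : Matrix (Fin (N+1)) (Fin (N+1)) ℝ :=
  Matrix.diagonal (fun i => if i = 0 then (-1 : ℝ) else 1)

/-- The Minkowski bilinear form `η(x,y) = -x₀y₀ + ∑ᵢ xᵢyᵢ`. -/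
noncomputable def mdot {N : ℕ} (x y : Fin (N+1) → ℝ) : ℝ :=
  x ⬝ᵥ (eta N).mulVec y

/-- Future-directed timelike: `η(v,v) < 0` and `v₀ > 0`. -/
def FDTimelike {N : ℕ} (v : Fin (N+1) → ℝ) : Prop :=
  mdot v v < 0 ∧ 0 < v 0

/-- Future-directed lightlike: `v ≠ 0`, `η(v,v) = 0` and `v₀ > 0`. -/
def FDLightlike {N : ℕ} (v : Fin (N+1) → ℝ) : Prop :=
  v ≠ 0 ∧ mdot v v = 0 ∧ 0 < v 0

/-- Future-directed causal: future-directed timelike or lightlike. -/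
def FDCausal {N : ℕ} (v : Fin (N+1) → ℝ) : Prop :=
  FDTimelike v ∨ FDLightlike v

/-- The bilinear form associated to a matrix: `T(v,w) = vᵀ T w`. -/
noncomputable def Tbil {N : ℕ} (T : Matrix (Fin (N+1)) (Fin (N+1)) ℝ)
    (v w : Fin (N+1) → ℝ) : ℝ :=
  v ⬝ᵥ T.mulVec w

/-- The endomorphism associated to a stress-energy tensor: `u(v) = -ηTv`. -/
noncomputable def endo {N : ℕ} (T : Matrix (Fin (N+1)) (Fin (N+1)) ℝ)
    (v : Fin (N+1) → ℝ) : Fin (N+1) → ℝ :=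
  -((eta N).mulVec (T.mulVec v))

/-- The dominant energy condition: every future-directed causal vector is
sent by the associated endomorphism to a future-directed causal vector or zero. -/
def DEC {N : ℕ} (T : Matrix (Fin (N+1)) (Fin (N+1)) ℝ) : Prop :=
  ∀ v : Fin (N+1) → ℝ, FDCausal v → FDCausal (endo T v) ∨ endo T v = 0

lemma mdot_eq_sum {N : ℕ} (x y : Fin (N+1) → ℝ) :
    mdot x y = -(x 0 * y 0) + ∑ i : Fin N, x i.succ * y i.succ := by
  simp [mdot, eta, mulVec_diagonal, dotProduct, Fin.sum_univ_succ, Fin.succ_ne_zero]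

lemma mdot_comm {N : ℕ} (x y : Fin (N+1) → ℝ) : mdot x y = mdot y x := by
  simp only [mdot_eq_sum, mul_comm (x _)]

lemma Tbil_add_left {N : ℕ} (T : Matrix (Fin (N+1)) (Fin (N+1)) ℝ) (x y z : Fin (N+1) → ℝ) :
    Tbil T (x + y) z = Tbil T x z + Tbil T y z :=
  add_dotProduct x y _

lemma Tbil_add_right {N : ℕ} (T : Matrix (Fin (N+1)) (Fin (N+1)) ℝ) (x y z : Fin (N+1) → ℝ) :
    Tbil T x (y + z) = Tbil T x y + Tbil T x z := by
  simp only [Tbil, mulVec_add, dotProduct_add]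

lemma Tbil_smul_left {N : ℕ} (T : Matrix (Fin (N+1)) (Fin (N+1)) ℝ) (c : ℝ) (x y : Fin (N+1) → ℝ) :
    Tbil T (c • x) y = c * Tbil T x y :=
  smul_dotProduct c x _

lemma Tbil_smul_right {N : ℕ} (T : Matrix (Fin (N+1)) (Fin (N+1)) ℝ) (c : ℝ) (x y : Fin (N+1) → ℝ) :
    Tbil T x (c • y) = c * Tbil T x y := by
  simp only [Tbil, mulVec_smul, dotProduct_smul, smul_eq_mul]

lemma mdot_eq_Tbil {N : ℕ} (x y : Fin (N+1) → ℝ) : mdot x y = Tbil (eta N) x y := rfl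

/-- Reverse Cauchy–Schwarz inequality. -/
lemma mdot_nonpos_of_causal {N : ℕ} {v w : Fin (N+1) → ℝ} (hv : mdot v v ≤ 0) (hv0 : 0 ≤ v 0)
    (hw : mdot w w ≤ 0) (hw0 : 0 ≤ w 0) : mdot v w ≤ 0 := by
  rw [mdot_eq_sum] at hv hw ⊢
  have hcs := Finset.sum_mul_sq_le_sq_mul_sq Finset.univ (fun i : Fin N => v i.succ)
    (fun i => w i.succ)
  have hspatial : (∑ i : Fin N, v i.succ * w i.succ) ^ 2 ≤ (v 0 * w 0) ^ 2 := by
    simp only [sq, mul_mul_mul_comm (v 0)] at hcs ⊢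
    exact hcs.trans (mul_le_mul (by linarith) (by linarith)
      (Finset.sum_nonneg fun i _ => mul_self_nonneg _) (mul_self_nonneg _))
  linarith [(abs_le_of_sq_le_sq' hspatial (mul_nonneg hv0 hw0)).2]

lemma zero_lt_of_mdot_neg {N : ℕ} {v w : Fin (N+1) → ℝ} (hv : mdot v v ≤ 0) (hv0 : 0 ≤ v 0)
    (hw : mdot w w ≤ 0) (hvw : mdot v w < 0) : 0 < w 0 := by
  by_contra! hw0
  have hneg : mdot v (-w) = -mdot v w := by simp [mdot, mulVec_neg]
  have := mdot_nonpos_of_causal hv hv0 (w := -w) (by simpa [mdot, mulVec_neg] using hw)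
    (by simpa using hw0)
  linarith

lemma fdCausal_iff {N : ℕ} {v : Fin (N+1) → ℝ} : FDCausal v ↔ mdot v v ≤ 0 ∧ 0 < v 0 := by
  refine ⟨?_, fun ⟨hvv, hv0⟩ => ?_⟩
  · rintro (⟨hvv, hv0⟩ | ⟨-, hvv, hv0⟩)
    exacts [⟨hvv.le, hv0⟩, ⟨hvv.le, hv0⟩]
  · rcases hvv.lt_or_eq with hvv | hvv
    · exact Or.inl ⟨hvv, hv0⟩
    · exact Or.inr ⟨fun h => by simp [h] at hv0, hvv, hv0⟩

lemma mdot_endo {N : ℕ} (T : Matrix (Fin (N+1)) (Fin (N+1)) ℝ) (v w : Fin (N+1) → ℝ) :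
    mdot (endo T v) w = -Tbil T w v := by
  simp only [mdot, endo, Tbil, eta, mulVec_diagonal, dotProduct, Pi.neg_apply, neg_mul,
    Finset.sum_neg_distrib]
  refine congrArg _ (Finset.sum_congr rfl fun i _ => ?_)
  by_cases h : i = 0 <;> simp [h, mul_comm]

lemma DEC.Tbil_nonneg {N : ℕ} {T : Matrix (Fin (N+1)) (Fin (N+1)) ℝ} (hT : DEC T)
    {v w : Fin (N+1) → ℝ} (hv : FDCausal v) (hw : FDCausal w) : 0 ≤ Tbil T w v := by
  have hw' := fdCausal_iff.1 hw
  rcases hT v hv with hu | hu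
  · have hu' := fdCausal_iff.1 hu
    have := mdot_nonpos_of_causal hu'.1 hu'.2.le hw'.1 hw'.2.le
    linarith [mdot_endo T v w]
  · have := mdot_endo T v w
    simp only [hu, mdot, zero_dotProduct] at this
    linarith

lemma fdCausal_add_smul {N : ℕ} {x y : Fin (N+1) → ℝ} (hxx : mdot x x = -1) (hx0 : 0 < x 0)
    (hyy : mdot y y = 1) (hxy : mdot x y = 0) {σ : ℝ} (hσ : σ ^ 2 = 1) :
    FDCausal (x + σ • y) := by
  have hnull : mdot (x + σ • y) (x + σ • y) = 0 := by
    have hyx : mdot y x = 0 := mdot_comm y x ▸ hxy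
    simp only [mdot_eq_Tbil] at hxx hyy hxy hyx ⊢
    simp only [Tbil_add_left, Tbil_add_right, Tbil_smul_left, Tbil_smul_right,
      hxx, hyy, hxy, hyx]
    linear_combination hσ
  have hx_lt : mdot x (x + σ • y) < 0 := by
    simp only [mdot_eq_Tbil] at hxx hxy ⊢
    simp only [Tbil_add_right, Tbil_smul_right, hxx, hxy]
    norm_num
  exact fdCausal_iff.2 ⟨hnull.le, zero_lt_of_mdot_neg (by linarith) hx0.le hnull.le hx_lt⟩

theorem dec_frame_components_general {N : ℕ}
    (T : Matrix (Fin (N+1)) (Fin (N+1)) ℝ)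
    (hdec : DEC T)
    (e : Fin (N+1) → (Fin (N+1) → ℝ))
    (horth : ∀ a b : Fin (N+1),
      mdot (e a) (e b) = if a = b then (if a = 0 then (-1 : ℝ) else 1) else 0)
    (hfd : 0 < e 0 0) :
    ∀ a b : Fin (N+1), |Tbil T (e a) (e b)| ≤ Tbil T (e 0) (e 0) := by
  have he0 : FDCausal (e 0) := fdCausal_iff.2 ⟨by simp [horth], hfd⟩
  have hnull : ∀ a, a ≠ 0 → ∀ σ : ℝ, σ ^ 2 = 1 → FDCausal (e 0 + σ • e a) :=
    fun a ha σ hσ => fdCausal_add_smul (by simp [horth]) hfd (by simp [horth, ha])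
      (by simp [horth, ha.symm]) hσ
  have hone : (1 : ℝ) ^ 2 = 1 := one_pow 2
  have hneg_one : (-1 : ℝ) ^ 2 = 1 := by norm_num
  intro a b
  rcases eq_or_ne a 0 with rfl | ha <;> rcases eq_or_ne b 0 with rfl | hb
  · exact (abs_of_nonneg (hdec.Tbil_nonneg he0 he0)).le
  · have hp := hdec.Tbil_nonneg (hnull b hb 1 hone) he0
    have hm := hdec.Tbil_nonneg (hnull b hb (-1) hneg_one) he0
    simp only [Tbil_add_right, Tbil_smul_right] at hp hm
    exact abs_le.2 ⟨by linarith, by linarith⟩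
  · have hp := hdec.Tbil_nonneg he0 (hnull a ha 1 hone)
    have hm := hdec.Tbil_nonneg he0 (hnull a ha (-1) hneg_one)
    simp only [Tbil_add_left, Tbil_smul_left] at hp hm
    exact abs_le.2 ⟨by linarith, by linarith⟩
  · have h := fun σ τ hσ hτ => hdec.Tbil_nonneg (hnull b hb τ hτ) (hnull a ha σ hσ)
    have hpp := h 1 1 hone hone
    have hpm := h 1 (-1) hone hneg_one
    have hmp := h (-1) 1 hneg_one hone
    have hmm := h (-1) (-1) hneg_one hneg_one
    simp only [Tbil_add_left, Tbil_add_right, Tbil_smul_left, Tbil_smul_right] at hpp hpm hmp hmm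
    exact abs_le.2 ⟨by linarith, by linarith⟩

/-- In any orthonormal frame with `e₀` future-directed timelike, the frame
components of a stress-energy tensor satisfying the dominant energy condition
obey `|T^{ab}| ≤ T^{00}`. -/
theorem dec_frame_components {N : ℕ} (hN : 1 ≤ N)
    (T : Matrix (Fin (N+1)) (Fin (N+1)) ℝ) (hsymm : T.IsSymm)
    (hdec : DEC T)
    (e : Fin (N+1) → (Fin (N+1) → ℝ))
    (horth : ∀ a b : Fin (N+1),
      mdot (e a) (e b) = if a = b then (if a = 0 then (-1 : ℝ) else 1) else 0)
    (hfd : 0 < e 0 0) :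
    ∀ a b : Fin (N+1), |Tbil T (e a) (e b)| ≤ Tbil T (e 0) (e 0) :=
  dec_frame_components_general T hdec e horth hfd
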